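/- For any positive integer m, if k, l ∈ O(m,ℝ) then the matrix h(k,l) = (1/2) * [[k + JlJ, kJ - Jl],[Jk - lJ, JkJ + l]] satisfies h(k,l)ᵀ · J_{2m} · h(k,l) = J_{2m}, i.e., h(k,l) lies in the split orthogonal group O(m,m)(ℝ) defined by the anti-diagonal form. -/

import Mathlib

/-!
`T = [[1, J], [J, -1]]` is symmetric and, up to a factor `2`, interchanges the diagonal form
`diag(1, -1)` and the anti-diagonal form `J_{2m} = [[0, J], [J, 0]]` (both because `J² = 1`).
Since `h(k,l) = (1/2) T diag(k, l) T` and `diag(k, l)` preserves `diag(1, -1)` for orthogonal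
`k, l`, the form `J_{2m}` is preserved by `h(k,l)`.
-/

open Matrix

/-- The `m × m` anti-diagonal matrix of `1`'s. -/
noncomputable def Jmat (m : ℕ) : Matrix (Fin m) (Fin m) ℝ :=
  fun i j => if (i : ℕ) + (j : ℕ) = m - 1 then 1 else 0

/-- The `2m × 2m` anti-diagonal matrix of `1`'s, in block form `[[0, J],[J, 0]]`. -/
noncomputable def Jbig (m : ℕ) : Matrix (Fin m ⊕ Fin m) (Fin m ⊕ Fin m) ℝ :=
  Matrix.fromBlocks 0 (Jmat m) (Jmat m) 0

/-- The map `h(k,l) = (1/2)[[k + JlJ, kJ - Jl],[Jk - lJ, JkJ + l]]` in block form. -/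
noncomputable def hMap (m : ℕ) (k l : Matrix (Fin m) (Fin m) ℝ) :
    Matrix (Fin m ⊕ Fin m) (Fin m ⊕ Fin m) ℝ :=
  (1/2 : ℝ) • Matrix.fromBlocks
    (k + Jmat m * l * Jmat m) (k * Jmat m - Jmat m * l)
    (Jmat m * k - l * Jmat m) (Jmat m * k * Jmat m + l)

lemma Jmat_transpose (m : ℕ) : (Jmat m)ᵀ = Jmat m := by
  ext i j
  simp [Jmat, Nat.add_comm]

lemma Jmat_mul_self (m : ℕ) : Jmat m * Jmat m = 1 := by
  ext i j
  rw [mul_apply, Finset.sum_eq_single (Fin.rev i)]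
  · have hi := i.isLt
    have hj := j.isLt
    simp only [Jmat, Fin.val_rev, one_apply, Fin.ext_iff]
    rw [if_pos (by omega)]
    split_ifs <;> simp <;> omega
  · intro t _ ht
    have hi := i.isLt
    have hit : (i : ℕ) + t ≠ m - 1 := fun h => ht (Fin.ext (by simp only [Fin.val_rev]; omega))
    simp [Jmat, hit]
  · simp

namespace Matrix

variable {n R : Type*} [DecidableEq n] [CommRing R]

def diagToAntidiag (J : Matrix n n R) : Matrix (n ⊕ n) (n ⊕ n) R :=
  fromBlocks 1 J J (-1)

lemma diagToAntidiag_transpose {J : Matrix n n R} (hJ : Jᵀ = J) :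
    (diagToAntidiag J)ᵀ = diagToAntidiag J := by
  simp [diagToAntidiag, fromBlocks_transpose, hJ]

variable [Fintype n]

lemma diagToAntidiag_mul_antidiag_mul {J : Matrix n n R} (hJ : J * J = 1) :
    diagToAntidiag J * fromBlocks 0 J J 0 * diagToAntidiag J =
      (2 : R) • fromBlocks 1 0 0 (-1) := by
  simp [diagToAntidiag, fromBlocks_multiply, hJ, two_smul, fromBlocks_add]

lemma diagToAntidiag_mul_diag_mul {J : Matrix n n R} (hJ : J * J = 1) :
    diagToAntidiag J * fromBlocks 1 0 0 (-1) * diagToAntidiag J =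
      (2 : R) • fromBlocks 0 J J 0 := by
  simp [diagToAntidiag, fromBlocks_multiply, hJ, two_smul, fromBlocks_add]

lemma fromBlocks_transpose_mul_diag_mul_of_orthogonal {k l : Matrix n n R}
    (hk : kᵀ * k = 1) (hl : lᵀ * l = 1) :
    (fromBlocks k 0 0 l)ᵀ * fromBlocks 1 0 0 (-1) * fromBlocks k 0 0 l =
      (fromBlocks 1 0 0 (-1) : Matrix (n ⊕ n) (n ⊕ n) R) := by
  simp [fromBlocks_transpose, fromBlocks_multiply, hk, hl]

lemma transpose_mul_antidiag_mul_of_orthogonal {J k l : Matrix n n R}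
    (hJt : Jᵀ = J) (hJ : J * J = 1) (hk : kᵀ * k = 1) (hl : lᵀ * l = 1) :
    let h := diagToAntidiag J * fromBlocks k 0 0 l * diagToAntidiag J
    hᵀ * fromBlocks 0 J J 0 * h = (4 : R) • fromBlocks 0 J J 0 := by
  set T := diagToAntidiag J
  set D := fromBlocks k 0 0 l
  calc (T * D * T)ᵀ * fromBlocks 0 J J 0 * (T * D * T)
      = T * Dᵀ * (T * fromBlocks 0 J J 0 * T) * D * T := by
        simp only [transpose_mul, diagToAntidiag_transpose hJt, T, Matrix.mul_assoc]
    _ = (2 : R) • (T * (Dᵀ * fromBlocks 1 0 0 (-1) * D) * T) := by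
        rw [diagToAntidiag_mul_antidiag_mul hJ]
        simp only [Matrix.smul_mul, Matrix.mul_smul, Matrix.mul_assoc]
    _ = (4 : R) • fromBlocks 0 J J 0 := by
        rw [fromBlocks_transpose_mul_diag_mul_of_orthogonal hk hl, diagToAntidiag_mul_diag_mul hJ,
          smul_smul]
        norm_num

end Matrix

lemma hMap_eq_half_smul (m : ℕ) (k l : Matrix (Fin m) (Fin m) ℝ) :
    hMap m k l =
      (1/2 : ℝ) • (diagToAntidiag (Jmat m) * fromBlocks k 0 0 l * diagToAntidiag (Jmat m)) := by
  simp [hMap, diagToAntidiag, fromBlocks_multiply, sub_eq_add_neg, Matrix.mul_assoc]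

theorem stmt1 (m : ℕ)
    (k l : Matrix (Fin m) (Fin m) ℝ)
    (hk : kᵀ * k = 1) (hl : lᵀ * l = 1) :
    (hMap m k l)ᵀ * Jbig m * hMap m k l = Jbig m := by
  have hscaled := transpose_mul_antidiag_mul_of_orthogonal (Jmat_transpose m) (Jmat_mul_self m) hk hl
  rw [hMap_eq_half_smul, Jbig]
  simp only [transpose_smul, Matrix.smul_mul, Matrix.mul_smul] at hscaled ⊢
  rw [hscaled, smul_smul, smul_smul]
  norm_num
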